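/- For every x ≥ 0, (1/2)·√(1 − exp(−x²/2)) ≤ (1/√(2π)) · ∫_0^x exp(−t²/2) dt ≤ (1/2)·√(1 − exp(−2x²/π)). -/

import Mathlib

/-!
`(∫₀ˣ e^{-t²/2} dt)²` is the Gaussian mass of the square `[0, x]²`, and
`π/2 · (1 - e^{-k x²})` is the mass of the quarter disk of radius `√(2k) x`. The lower bound
compares the square with its inscribed quarter disk (`k = 1/2`), the upper bound with the
quarter disk of the same area (`k = 2/π`). Instead of integrating in polar coordinates, note
that each difference `D` vanishes at `0` and tends to `0` at infinity, while `D'` is first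
nonnegative and then nonpositive: so `D` rises, then falls, and stays nonnegative. The sign
pattern of `D'` is obtained by the same argument one or two derivatives further down.
-/

open MeasureTheory Real Set Filter Topology

def StaysNonposAfterNeg (g : ℝ → ℝ) : Prop :=
  ∀ a b : ℝ, 0 ≤ a → a ≤ b → g a < 0 → g b ≤ 0

namespace StaysNonposAfterNeg

variable {f g g' c : ℝ → ℝ}

lemma of_antitoneOn (hf : AntitoneOn f (Ici 0)) : StaysNonposAfterNeg f :=
  fun _ _ ha hab hneg => (hf ha (ha.trans hab) hab).trans hneg.le

lemma mul_left (hc : ∀ x, 0 ≤ x → 0 ≤ c x) (hf : StaysNonposAfterNeg f) :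
    StaysNonposAfterNeg fun x => c x * f x :=
  fun a b ha hab hneg => mul_nonpos_of_nonneg_of_nonpos (hc b (ha.trans hab))
    (hf a b ha hab (Left.neg_of_mul_neg_right hneg (hc a ha)))

lemma comp_sq (hf : StaysNonposAfterNeg f) : StaysNonposAfterNeg fun x => f (x ^ 2) :=
  fun a _ ha hab hneg => hf _ _ (sq_nonneg a) (pow_le_pow_left₀ ha hab 2) hneg

lemma antitoneOn_Ici (hd : ∀ x, HasDerivAt g (g' x) x) (hg' : StaysNonposAfterNeg g')
    {a : ℝ} (ha : 0 ≤ a) (hneg : g' a < 0) : AntitoneOn g (Ici a) :=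
  antitoneOn_of_hasDerivWithinAt_nonpos (convex_Ici a)
    (fun x _ => (hd x).continuousAt.continuousWithinAt) (fun x _ => (hd x).hasDerivWithinAt)
    fun x hx => hg' a x ha (interior_subset hx) hneg

lemma exists_le_antitoneOn_Ici (hd : ∀ x, HasDerivAt g (g' x) x) (hg' : StaysNonposAfterNeg g')
    {x : ℝ} (hx : 0 ≤ x) (hlt : g x < g 0) :
    ∃ a ≤ x, AntitoneOn g (Ici a) := by
  obtain ⟨a, ha, hneg⟩ : ∃ a ∈ Icc 0 x, g' a < 0 := by
    by_contra! hpos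
    have hmono : MonotoneOn g (Icc 0 x) :=
      monotoneOn_of_hasDerivWithinAt_nonneg (convex_Icc 0 x)
        (fun t _ => (hd t).continuousAt.continuousWithinAt) (fun t _ => (hd t).hasDerivWithinAt)
        fun t ht => hpos t (interior_subset ht)
    exact hlt.not_ge (hmono ⟨le_rfl, hx⟩ ⟨hx, le_rfl⟩ hx)
  exact ⟨a, ha.2, antitoneOn_Ici hd hg' ha.1 hneg⟩

lemma of_hasDerivAt (hd : ∀ x, HasDerivAt g (g' x) x) (hg' : StaysNonposAfterNeg g')
    (h0 : 0 ≤ g 0) : StaysNonposAfterNeg g := by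
  intro a b ha hab hneg
  obtain ⟨a₀, ha₀, hanti⟩ := exists_le_antitoneOn_Ici hd hg' ha (hneg.trans_le h0)
  exact (hanti ha₀ (ha₀.trans hab) hab).trans hneg.le

lemma nonneg_of_tendsto (hd : ∀ x, HasDerivAt g (g' x) x) (hg' : StaysNonposAfterNeg g')
    (h0 : 0 ≤ g 0) (hlim : Tendsto g atTop (𝓝 0)) {x : ℝ} (hx : 0 ≤ x) :
    0 ≤ g x := by
  by_contra! hneg
  obtain ⟨a, hax, hanti⟩ := exists_le_antitoneOn_Ici hd hg' hx (hneg.trans_le h0)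
  exact hneg.not_ge <| le_of_tendsto hlim <| (eventually_ge_atTop x).mono fun y hy =>
    hanti hax (hax.trans hy) hy

end StaysNonposAfterNeg

lemma staysNonposAfterNeg_one_add_mul_sub_exp {a : ℝ} (ha : 0 ≤ a) (b : ℝ) :
    StaysNonposAfterNeg fun u => 1 + b * u - exp (-a * u) := by
  refine .of_hasDerivAt (g' := fun u => b + a * exp (-a * u)) (fun u => ?_) ?_ (by simp)
  · refine (((hasDerivAt_id' u).const_mul b).const_add 1).sub
      ((hasDerivAt_id' u).const_mul (-a)).exp |>.congr_deriv ?_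
    ring
  · refine .of_antitoneOn fun u _ v _ huv => ?_
    gcongr b + a * exp ?_
    nlinarith

noncomputable def gaussIntegral (x : ℝ) : ℝ := ∫ t in (0 : ℝ)..x, exp (-t ^ 2 / 2)

lemma gaussIntegral_zero : gaussIntegral 0 = 0 := intervalIntegral.integral_same

lemma gaussIntegral_nonneg {x : ℝ} (hx : 0 ≤ x) : 0 ≤ gaussIntegral x :=
  intervalIntegral.integral_nonneg hx fun _ _ => (exp_pos _).le

lemma hasDerivAt_gaussIntegral (x : ℝ) : HasDerivAt gaussIntegral (exp (-x ^ 2 / 2)) x := by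
  have hcont : Continuous fun t : ℝ => exp (-t ^ 2 / 2) := by fun_prop
  exact intervalIntegral.integral_hasDerivAt_right (hcont.intervalIntegrable _ _)
    hcont.stronglyMeasurable.stronglyMeasurableAtFilter hcont.continuousAt

lemma hasDerivAt_gaussIntegral_sq (x : ℝ) :
    HasDerivAt (fun x => gaussIntegral x ^ 2) (2 * gaussIntegral x * exp (-x ^ 2 / 2)) x :=
  ((hasDerivAt_gaussIntegral x).pow 2).congr_deriv (by ring)

lemma tendsto_gaussIntegral_sq : Tendsto (fun x => gaussIntegral x ^ 2) atTop (𝓝 (π / 2)) := by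
  have hform : (fun t : ℝ => exp (-t ^ 2 / 2)) = fun t => exp (-(1 / 2) * t ^ 2) := by
    ext t; congr 1; ring
  have hlim : Tendsto gaussIntegral atTop (𝓝 (√(π / (1 / 2)) / 2)) := by
    have := intervalIntegral_tendsto_integral_Ioi 0
      ((integrable_exp_neg_mul_sq (by norm_num : (0 : ℝ) < 1 / 2)).integrableOn) tendsto_id
    rwa [integral_gaussian_Ioi, ← hform] at this
  convert hlim.pow 2 using 2
  rw [div_pow, sq_sqrt (by positivity)]
  ring

/-- The mass `∬ e^{-(s² + t²)/2}` of the quarter disk of radius `√(2k) x`. -/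
noncomputable def quarterDiskMass (k x : ℝ) : ℝ := π / 2 * (1 - exp (-k * x ^ 2))

lemma quarterDiskMass_zero (k : ℝ) : quarterDiskMass k 0 = 0 := by
  simp [quarterDiskMass]

lemma hasDerivAt_quarterDiskMass (k x : ℝ) :
    HasDerivAt (quarterDiskMass k) (π * k * x * exp (-k * x ^ 2)) x :=
  ((((hasDerivAt_pow 2 x).const_mul (-k)).exp.const_sub 1).const_mul (π / 2)).congr_deriv
    (by ring)

lemma tendsto_quarterDiskMass {k : ℝ} (hk : 0 < k) :
    Tendsto (quarterDiskMass k) atTop (𝓝 (π / 2)) := by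
  have hexp : Tendsto (fun x => exp (-k * x ^ 2)) atTop (𝓝 0) :=
    tendsto_exp_atBot.comp <| (tendsto_pow_atTop two_ne_zero).const_mul_atTop_of_neg (by linarith)
  have := (hexp.const_sub 1).const_mul (π / 2)
  rwa [sub_zero, mul_one] at this

lemma quarterDiskMass_half_le_sq_gaussIntegral {x : ℝ} (hx : 0 ≤ x) :
    quarterDiskMass (1 / 2) x ≤ gaussIntegral x ^ 2 := by
  have hslope : StaysNonposAfterNeg fun x => 2 * gaussIntegral x - π / 2 * x := by
    refine .of_hasDerivAt (g' := fun x => 2 * exp (-x ^ 2 / 2) - π / 2)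
      (fun x => (((hasDerivAt_gaussIntegral x).const_mul 2).sub
        ((hasDerivAt_id' x).const_mul (π / 2))).congr_deriv (by ring))
      (.of_antitoneOn fun u (hu : 0 ≤ u) v _ huv => ?_) (by simp [gaussIntegral_zero])
    gcongr 2 * exp ?_ - _
    nlinarith
  have hderiv : StaysNonposAfterNeg fun x =>
      exp (-x ^ 2 / 2) * (2 * gaussIntegral x - π / 2 * x) :=
    hslope.mul_left fun _ _ => (exp_pos _).le
  have hdiff := hderiv.nonneg_of_tendsto
    (g := fun x => gaussIntegral x ^ 2 - quarterDiskMass (1 / 2) x)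
    (fun x => ((hasDerivAt_gaussIntegral_sq x).sub
      (hasDerivAt_quarterDiskMass (1 / 2) x)).congr_deriv
        (by rw [show -(1 / 2) * x ^ 2 = -x ^ 2 / 2 by ring]; ring))
    (by simp [gaussIntegral_zero, quarterDiskMass_zero])
    (by simpa using tendsto_gaussIntegral_sq.sub (tendsto_quarterDiskMass one_half_pos)) hx
  exact sub_nonneg.1 hdiff

/-- The exponent `1/2 - 2/π` makes `e^{-x²/2} e^{(1/2 - 2/π) x²} = e^{-2x²/π}`, so that this
function is the derivative of `quarterDiskMass (2/π) - gaussIntegral ^ 2` over `2 e^{-x²/2}`. -/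
lemma staysNonposAfterNeg_mul_exp_sub_gaussIntegral :
    StaysNonposAfterNeg fun x => x * exp ((1 / 2 - 2 / π) * x ^ 2) - gaussIntegral x := by
  have hk : 0 ≤ 1 - 2 / π := by
    rw [sub_nonneg, div_le_one pi_pos]
    linarith [pi_gt_three]
  have hderiv : StaysNonposAfterNeg fun x =>
      exp ((1 / 2 - 2 / π) * x ^ 2) * (1 + (1 - 4 / π) * x ^ 2 - exp (-(1 - 2 / π) * x ^ 2)) :=
    (staysNonposAfterNeg_one_add_mul_sub_exp hk _).comp_sq.mul_left fun _ _ => (exp_pos _).le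
  refine .of_hasDerivAt (fun x => ?_) hderiv (by simp [gaussIntegral_zero])
  have hexp : exp ((1 / 2 - 2 / π) * x ^ 2) * exp (-(1 - 2 / π) * x ^ 2) = exp (-x ^ 2 / 2) := by
    rw [← exp_add]; ring_nf
  refine (((hasDerivAt_id' x).mul ((hasDerivAt_pow 2 x).const_mul _).exp).sub
    (hasDerivAt_gaussIntegral x)).congr_deriv ?_
  linear_combination hexp

lemma sq_gaussIntegral_le_quarterDiskMass {x : ℝ} (hx : 0 ≤ x) :
    gaussIntegral x ^ 2 ≤ quarterDiskMass (2 / π) x := by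
  have hderiv : StaysNonposAfterNeg fun x =>
      2 * exp (-x ^ 2 / 2) * (x * exp ((1 / 2 - 2 / π) * x ^ 2) - gaussIntegral x) :=
    staysNonposAfterNeg_mul_exp_sub_gaussIntegral.mul_left fun _ _ => by positivity
  have hdiff := hderiv.nonneg_of_tendsto
    (g := fun x => quarterDiskMass (2 / π) x - gaussIntegral x ^ 2) (fun x => ?_)
    (by simp [gaussIntegral_zero, quarterDiskMass_zero])
    (by simpa using (tendsto_quarterDiskMass (by positivity)).sub tendsto_gaussIntegral_sq) hx
  · exact sub_nonneg.1 hdiff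
  have hexp : exp (-x ^ 2 / 2) * exp ((1 / 2 - 2 / π) * x ^ 2) = exp (-(2 / π) * x ^ 2) := by
    rw [← exp_add]; ring_nf
  have hπ : π * (2 / π) = 2 := by field_simp
  refine ((hasDerivAt_quarterDiskMass (2 / π) x).sub
    (hasDerivAt_gaussIntegral_sq x)).congr_deriv ?_
  linear_combination (x * exp (-(2 / π) * x ^ 2)) * hπ - 2 * x * hexp

lemma inv_sqrt_two_pi_mul_eq {I : ℝ} (hI : 0 ≤ I) :
    (√(2 * π))⁻¹ * I = 1 / 2 * √(2 * I ^ 2 / π) := by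
  rw [sqrt_div' _ pi_pos.le, sqrt_mul' _ (sq_nonneg I), sqrt_sq hI, sqrt_mul zero_le_two]
  field_simp
  rw [sq_sqrt zero_le_two, mul_comm]

/-- Chu's (1955) bounds: for every `x ≥ 0`,
`(1/2)√(1 − e^{−x²/2}) ≤ (1/√(2π)) ∫_0^x e^{−t²/2} dt ≤ (1/2)√(1 − e^{−2x²/π})`. -/
theorem chu_bounds (x : ℝ) (hx : 0 ≤ x) :
    (1 / 2) * Real.sqrt (1 - Real.exp (-x ^ 2 / 2)) ≤
      (Real.sqrt (2 * Real.pi))⁻¹ * (∫ t in (0 : ℝ)..x, Real.exp (-t ^ 2 / 2)) ∧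
    (Real.sqrt (2 * Real.pi))⁻¹ * (∫ t in (0 : ℝ)..x, Real.exp (-t ^ 2 / 2)) ≤
      (1 / 2) * Real.sqrt (1 - Real.exp (-2 * x ^ 2 / Real.pi)) := by
  have hlow := quarterDiskMass_half_le_sq_gaussIntegral hx
  have hup := sq_gaussIntegral_le_quarterDiskMass hx
  rw [quarterDiskMass, show -(1 / 2) * x ^ 2 = -x ^ 2 / 2 by ring] at hlow
  rw [quarterDiskMass, show -(2 / π) * x ^ 2 = -2 * x ^ 2 / π by ring] at hup
  rw [← gaussIntegral, inv_sqrt_two_pi_mul_eq (gaussIntegral_nonneg hx)]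
  constructor <;> gcongr 1 / 2 * √?_
  · rw [le_div_iff₀ pi_pos]; linarith
  · rw [div_le_iff₀ pi_pos]; linarith
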